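/- Let A be a normal ordered subgroupoid of an ordered groupoid G. Then the quotient map ϖ : G → G ⫽ A, g ↦ [g], is a fibration: for every identity e of G and every h ∈ G with e ≃_A hh⁻¹, there exists g ∈ G with gg⁻¹ = e and g ≃_A h. -/
import Mathlib


/-!  A one-sorted algebraic formalization of ordered groupoids (Ehresmann / Lawson style).
Arrows form the carrier; composition `g * h` is "defined" when `g⁻¹ * g = h * h⁻¹`,
and is junk otherwise.  `res f g` is the restriction `(f|g)` of axiom (OG3). -/

universe u v w u'

class OGroupoid (G : Type u) extends PartialOrder G, Mul G, Inv G where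
  gpd_assoc : ∀ g h k : G, g⁻¹ * g = h * h⁻¹ → h⁻¹ * h = k * k⁻¹ →
      (g * h) * k = g * (h * k)
  gpd_inv_inv : ∀ g : G, g⁻¹⁻¹ = g
  gpd_mul_inv_rev : ∀ g h : G, g⁻¹ * g = h * h⁻¹ → (g * h)⁻¹ = h⁻¹ * g⁻¹
  gpd_dom_mul : ∀ g h : G, g⁻¹ * g = h * h⁻¹ → (g * h) * (g * h)⁻¹ = g * g⁻¹
  gpd_ran_mul : ∀ g h : G, g⁻¹ * g = h * h⁻¹ → (g * h)⁻¹ * (g * h) = h⁻¹ * h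
  gpd_id_left : ∀ g : G, g * g⁻¹ * g = g
  gpd_id_right : ∀ g : G, g * (g⁻¹ * g) = g
  ord_inv : ∀ g h : G, g ≤ h → g⁻¹ ≤ h⁻¹
  ord_mul : ∀ g₁ g₂ h₁ h₂ : G, g₁ ≤ g₂ → h₁ ≤ h₂ →
      g₁⁻¹ * g₁ = h₁ * h₁⁻¹ → g₂⁻¹ * g₂ = h₂ * h₂⁻¹ → g₁ * h₁ ≤ g₂ * h₂
  res : G → G → G
  res_dom : ∀ f g : G, f * f⁻¹ = f → f ≤ g * g⁻¹ → res f g * (res f g)⁻¹ = f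
  res_le : ∀ f g : G, f * f⁻¹ = f → f ≤ g * g⁻¹ → res f g ≤ g
  res_unique : ∀ f g k : G, f * f⁻¹ = f → f ≤ g * g⁻¹ → k * k⁻¹ = f → k ≤ g →
      k = res f g

namespace OGroupoid

variable {G : Type u} [OGroupoid G]

/-- The domain identity `g𝐝 = g * g⁻¹`. -/
def dm (g : G) : G := g * g⁻¹

/-- The range identity `g𝐫 = g⁻¹ * g`. -/
def rn (g : G) : G := g⁻¹ * g

/-- The composition `g * h` is defined. -/
def Cmp (g h : G) : Prop := g⁻¹ * g = h * h⁻¹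

/-- `e` is an identity of the groupoid. -/
def IsId (e : G) : Prop := e * e⁻¹ = e

/-- The corestriction `(g|f) = (f|g⁻¹)⁻¹` for an identity `f ≤ g𝐫`. -/
def cor (g f : G) : G := (res f g⁻¹)⁻¹

end OGroupoid

open OGroupoid

/-- An ordered functor between ordered groupoids. -/
structure OFunctor (G : Type u) (H : Type v) [OGroupoid G] [OGroupoid H] where
  toFun : G → H
  map_mul : ∀ g h : G, Cmp g h → toFun (g * h) = toFun g * toFun h
  map_inv : ∀ g : G, toFun g⁻¹ = (toFun g)⁻¹
  map_le : ∀ g h : G, g ≤ h → toFun g ≤ toFun h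

namespace OFunctor

variable {G : Type u} {H : Type v} [OGroupoid G] [OGroupoid H]

/-- Star-surjectivity: `φ` is a fibration of ordered groupoids. -/
def StarSurjective (φ : OFunctor G H) : Prop :=
  ∀ e : G, IsId e → ∀ h : H, dm h = φ.toFun e → ∃ g : G, dm g = e ∧ φ.toFun g = h

/-- Star-injectivity: `φ` is an immersion of ordered groupoids. -/
def StarInjective (φ : OFunctor G H) : Prop :=
  ∀ g k : G, dm g = dm k → φ.toFun g = φ.toFun k → g = k

/-- A covering is a star-bijective ordered functor. -/
def IsCovering (φ : OFunctor G H) : Prop := StarSurjective φ ∧ StarInjective φ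

/-- The kernel of an ordered functor. -/
def ker (φ : OFunctor G H) : Set G := {g : G | IsId (φ.toFun g)}

end OFunctor

namespace OGroupoid

variable {G : Type u} [OGroupoid G]

/-- `A` is a subgroupoid: closed under inversion and (defined) composition. -/
def IsSubgroupoid (A : Set G) : Prop :=
  (∀ a ∈ A, a⁻¹ ∈ A) ∧ ∀ a ∈ A, ∀ b ∈ A, Cmp a b → a * b ∈ A

/-- `A` is a normal ordered subgroupoid of `G`: a wide subgroupoid, closed under
restriction, and closed under conjugation `h⁻¹ a k` whenever `h` and `k` have a
common upper bound in `G`. -/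
def IsNormalOSub (A : Set G) : Prop :=
  IsSubgroupoid A ∧
  (∀ e : G, IsId e → e ∈ A) ∧
  (∀ a ∈ A, ∀ e : G, IsId e → e ≤ dm a → res e a ∈ A) ∧
  (∀ a ∈ A, ∀ h k : G, (∃ g : G, h ≤ g ∧ k ≤ g) → dm h = dm a → rn a = dm k →
      h⁻¹ * a * k ∈ A)

/-- The relation `g ≃_A h`: there are `a, b, c, d ∈ A` with `a g b` and `c h d`
defined, `a g b ≤ h` and `c h d ≤ g`. -/
def simA (A : Set G) (g h : G) : Prop :=
  (∃ a ∈ A, ∃ b ∈ A, Cmp a g ∧ Cmp g b ∧ a * g * b ≤ h) ∧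
  (∃ c ∈ A, ∃ d ∈ A, Cmp c h ∧ Cmp h d ∧ c * h * d ≤ g)

/-- The relation inducing the order on `≃_A`-classes: `[g] ≤ [k]` iff there are
`a, b ∈ A` with `a g b` defined and `a g b ≤ k`. -/
def leA (A : Set G) (g k : G) : Prop :=
  ∃ a ∈ A, ∃ b ∈ A, Cmp a g ∧ Cmp g b ∧ a * g * b ≤ k

/-- An `A`-nexus between identities `e` and `f`: a pair `(a,p)` of arrows of `A`
with `a𝐝 ≤ e`, `a𝐫 = f`, `p𝐝 ≤ f`, `p𝐫 = e`. -/
def IsNexus (A : Set G) (a p e f : G) : Prop :=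
  a ∈ A ∧ p ∈ A ∧ dm a ≤ e ∧ rn a = f ∧ dm p ≤ f ∧ rn p = e

end OGroupoid

section Helpers

variable {G : Type u} [OGroupoid G]

lemma cmp_self_inv' (g : G) : g⁻¹ * g = g⁻¹ * g⁻¹⁻¹ := by rw [gpd_inv_inv]

lemma cmp_inv_self' (g : G) : g⁻¹⁻¹ * g⁻¹ = g * g⁻¹ := by rw [gpd_inv_inv]

lemma isId_dm' (g : G) : (g * g⁻¹) * (g * g⁻¹)⁻¹ = g * g⁻¹ :=
  gpd_dom_mul g g⁻¹ (cmp_self_inv' g)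

lemma isId_rn' (g : G) : (g⁻¹ * g) * (g⁻¹ * g)⁻¹ = g⁻¹ * g := by
  have := isId_dm' (g⁻¹); rwa [gpd_inv_inv] at this

lemma inv_id' {e : G} (he : e * e⁻¹ = e) : e⁻¹ = e := by
  have h1 : (e * e⁻¹)⁻¹ = e * e⁻¹ := by
    rw [gpd_mul_inv_rev e e⁻¹ (cmp_self_inv' e), gpd_inv_inv]
  rwa [he] at h1

lemma mul_self_id' {e : G} (he : e * e⁻¹ = e) : e * e = e := by
  have h1 := gpd_id_left e
  rwa [he] at h1

/-- Any element below an identity equals its own domain (hence is an identity). -/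
lemma eq_dm_of_le_id' {m f : G} (hf : f * f⁻¹ = f) (hle : m ≤ f) : m = m * m⁻¹ := by
  have h0 : m * m⁻¹ ≤ f * f⁻¹ :=
    ord_mul m f m⁻¹ f⁻¹ hle (ord_inv _ _ hle) (cmp_self_inv' m) (cmp_self_inv' f)
  have hmf : m * m⁻¹ ≤ f := by rwa [hf] at h0
  have h1 : m = res (m * m⁻¹) f :=
    res_unique (m * m⁻¹) f m (isId_dm' m) h0 rfl hle
  have h2 : m * m⁻¹ = res (m * m⁻¹) f :=
    res_unique (m * m⁻¹) f (m * m⁻¹) (isId_dm' m) h0 (isId_dm' m) hmf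
  exact h1.trans h2.symm

/-- Existence of restrictions, packaged with their defining properties. -/
lemma exists_res' {f g : G} (hf : f * f⁻¹ = f) (hle : f ≤ g * g⁻¹) :
    ∃ r : G, r * r⁻¹ = f ∧ r ≤ g ∧ ∀ k, k * k⁻¹ = f → k ≤ g → k = r :=
  ⟨res f g, res_dom f g hf hle, res_le f g hf hle,
    fun k h1 h2 => res_unique f g k hf hle h1 h2⟩

end Helpers

/-- **Statement 14.** The quotient map `ϖ : G → G ⫽ A` is a fibration: for every
identity `e` of `G` and every `h ∈ G` with `e ≃_A hh⁻¹` there exists `g ∈ G` with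
`gg⁻¹ = e` and `g ≃_A h`. -/
theorem quotient_map_is_fibration {G : Type u} [OGroupoid G] (A : Set G)
    (hA : IsNormalOSub A) :
    ∀ e : G, IsId e → ∀ h : G, simA A e (dm h) → ∃ g : G, dm g = e ∧ simA A g h := by
  intro e he h hsim
  obtain ⟨⟨a, haA, b, hbA, hae, heb, hab⟩, c, hcA, d, hdA, hcf, hfd, hcd⟩ := hsim
  simp only [Cmp, dm, IsId] at hae heb hab hcf hfd hcd he ⊢
  simp only [simA, Cmp, dm]
  -- basic facts about the identities e and f := h * h⁻¹
  have hei : e⁻¹ = e := inv_id' he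
  have hee : e * e = e := mul_self_id' he
  have hf : (h * h⁻¹) * (h * h⁻¹)⁻¹ = h * h⁻¹ := isId_dm' h
  have hfi : (h * h⁻¹)⁻¹ = h * h⁻¹ := inv_id' hf
  have hff : (h * h⁻¹) * (h * h⁻¹) = h * h⁻¹ := mul_self_id' hf
  -- the a-side data: m := a * b = a * a⁻¹ is an identity below h * h⁻¹, rn a = e
  have ha_rn : a⁻¹ * a = e := by rw [hae, he]
  have hb_dm : b * b⁻¹ = e := by rw [← heb, hei, hee]
  have hab_cmp : a⁻¹ * a = b * b⁻¹ := by rw [ha_rn, hb_dm]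
  have hae' : a * e = a := by have h1 := gpd_id_right a; rwa [ha_rn] at h1
  have hm_le0 : a * b ≤ h * h⁻¹ := by rwa [hae'] at hab
  have hm : a * b = a * a⁻¹ :=
    (eq_dm_of_le_id' hf hm_le0).trans (gpd_dom_mul a b hab_cmp)
  have hm_le : a * a⁻¹ ≤ h * h⁻¹ := by rw [← hm]; exact hm_le0
  -- the c-side data: n := c * d = c * c⁻¹ is an identity below e, rn c = h * h⁻¹
  have hc_rn : c⁻¹ * c = h * h⁻¹ := by rw [hcf, hf]
  have hd_dm : d * d⁻¹ = h * h⁻¹ := by rw [← hfd, hfi, hff]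
  have hcd_cmp : c⁻¹ * c = d * d⁻¹ := by rw [hc_rn, hd_dm]
  have hcf' : c * (h * h⁻¹) = c := by have h1 := gpd_id_right c; rwa [hc_rn] at h1
  have hn_le0 : c * d ≤ e := by rwa [hcf'] at hcd
  have hn : c * d = c * c⁻¹ :=
    (eq_dm_of_le_id' he hn_le0).trans (gpd_dom_mul c d hcd_cmp)
  have hn_le : c * c⁻¹ ≤ e := by rw [← hn]; exact hn_le0
  -- h₁ := the restriction of h to m = a * a⁻¹
  obtain ⟨h₁, hh1_dm, hh1_le, hh1_uniq⟩ := exists_res' (isId_dm' a) hm_le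
  have hg_cmp : a⁻¹⁻¹ * a⁻¹ = h₁ * h₁⁻¹ := by rw [gpd_inv_inv, hh1_dm]
  have hg_dm : (a⁻¹ * h₁) * (a⁻¹ * h₁)⁻¹ = e := by
    rw [gpd_dom_mul a⁻¹ h₁ hg_cmp, gpd_inv_inv, ha_rn]
  refine ⟨a⁻¹ * h₁, hg_dm, ?_, ?_⟩
  · -- a * (a⁻¹ * h₁) * rn h₁ = h₁ ≤ h
    refine ⟨a, haA, h₁⁻¹ * h₁, hA.2.1 _ (isId_rn' h₁), ?_, ?_, ?_⟩
    · rw [hg_dm, ha_rn]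
    · rw [gpd_ran_mul a⁻¹ h₁ hg_cmp, isId_rn' h₁]
    · have e1 : a * (a⁻¹ * h₁) = h₁ := by
        rw [← gpd_assoc a a⁻¹ h₁ (cmp_self_inv' a) hg_cmp, ← hh1_dm]
        exact gpd_id_left h₁
      rw [e1, gpd_id_right h₁]
      exact hh1_le
  · -- the reverse direction, via normality
    have hainvA : a⁻¹ ∈ A := hA.1.1 a haA
    have hn_id : (c * c⁻¹) * (c * c⁻¹)⁻¹ = c * c⁻¹ := isId_dm' c
    have hn_le_dma : c * c⁻¹ ≤ a⁻¹ * a⁻¹⁻¹ := by rw [gpd_inv_inv, ha_rn]; exact hn_le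
    -- a' := res (c * c⁻¹) a⁻¹ ∈ A
    have ha'A : res (c * c⁻¹) a⁻¹ ∈ A := by
      refine hA.2.2.1 a⁻¹ hainvA (c * c⁻¹) hn_id ?_
      show c * c⁻¹ ≤ a⁻¹ * a⁻¹⁻¹
      exact hn_le_dma
    set a' := res (c * c⁻¹) a⁻¹ with ha'def
    have ha'_dm : a' * a'⁻¹ = c * c⁻¹ := res_dom _ _ hn_id hn_le_dma
    have ha'_le : a' ≤ a⁻¹ := res_le _ _ hn_id hn_le_dma
    have ha'i_le : a'⁻¹ ≤ a := by
      have h1 := ord_inv _ _ ha'_le; rwa [gpd_inv_inv] at h1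
    have hm'_le : a'⁻¹ * a' ≤ a * a⁻¹ :=
      ord_mul a'⁻¹ a a' a⁻¹ ha'i_le ha'_le (cmp_inv_self' a') (cmp_self_inv' a)
    have hm'_le_h : a'⁻¹ * a' ≤ h * h⁻¹ := le_trans hm'_le hm_le
    have hm'_id : (a'⁻¹ * a') * (a'⁻¹ * a')⁻¹ = a'⁻¹ * a' := isId_rn' a'
    -- h₂ := the restriction of h to m' = a'⁻¹ * a'
    obtain ⟨h₂, hh2_dm, hh2_le, hh2_uniq⟩ := exists_res' hm'_id hm'_le_h
    -- h₂ ≤ h₁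
    have hm'_le_h1 : a'⁻¹ * a' ≤ h₁ * h₁⁻¹ := by rw [hh1_dm]; exact hm'_le
    obtain ⟨r, hr_dm, hr_le, _⟩ := exists_res' hm'_id hm'_le_h1
    have hr_eq : r = h₂ := hh2_uniq r hr_dm (le_trans hr_le hh1_le)
    have hh2_le1 : h₂ ≤ h₁ := hr_eq ▸ hr_le
    -- w := c⁻¹ * a' ∈ A, an arrow from h*h⁻¹ to m'
    have hw_cmp : c⁻¹⁻¹ * c⁻¹ = a' * a'⁻¹ := by rw [gpd_inv_inv, ha'_dm]
    have hwA : c⁻¹ * a' ∈ A := hA.1.2 c⁻¹ (hA.1.1 c hcA) a' ha'A hw_cmp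
    have hw_dm : (c⁻¹ * a') * (c⁻¹ * a')⁻¹ = h * h⁻¹ := by
      rw [gpd_dom_mul c⁻¹ a' hw_cmp, gpd_inv_inv, hc_rn]
    have hw_rn : (c⁻¹ * a')⁻¹ * (c⁻¹ * a') = a'⁻¹ * a' := gpd_ran_mul c⁻¹ a' hw_cmp
    -- d' := h⁻¹ * (c⁻¹ * a') * h₂ ∈ A by normality
    have hd'A : h⁻¹ * (c⁻¹ * a') * h₂ ∈ A := by
      refine hA.2.2.2 (c⁻¹ * a') hwA h h₂ ⟨h, le_refl h, hh2_le⟩ ?_ ?_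
      · show h * h⁻¹ = (c⁻¹ * a') * (c⁻¹ * a')⁻¹
        exact hw_dm.symm
      · show (c⁻¹ * a')⁻¹ * (c⁻¹ * a') = h₂ * h₂⁻¹
        rw [hw_rn, hh2_dm]
    have hcmp2 : h⁻¹⁻¹ * h⁻¹ = (c⁻¹ * a') * (c⁻¹ * a')⁻¹ := by
      rw [gpd_inv_inv, hw_dm]
    have hcmp1 : (h⁻¹ * (c⁻¹ * a'))⁻¹ * (h⁻¹ * (c⁻¹ * a')) = h₂ * h₂⁻¹ := by
      rw [gpd_ran_mul h⁻¹ (c⁻¹ * a') hcmp2, hw_rn, hh2_dm]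
    have hd'_dm : (h⁻¹ * (c⁻¹ * a') * h₂) * (h⁻¹ * (c⁻¹ * a') * h₂)⁻¹ = h⁻¹ * h := by
      rw [gpd_dom_mul (h⁻¹ * (c⁻¹ * a')) h₂ hcmp1,
        gpd_dom_mul h⁻¹ (c⁻¹ * a') hcmp2, gpd_inv_inv]
    refine ⟨c, hcA, h⁻¹ * (c⁻¹ * a') * h₂, hd'A, hc_rn, hd'_dm.symm, ?_⟩
    -- compute c * h * d' = a' * h₂
    have hch_rn : (c * h)⁻¹ * (c * h) = h⁻¹ * h := gpd_ran_mul c h hc_rn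
    have cmpA : (c * h)⁻¹ * (c * h) = (h⁻¹ * (c⁻¹ * a')) * (h⁻¹ * (c⁻¹ * a'))⁻¹ := by
      rw [hch_rn, gpd_dom_mul h⁻¹ (c⁻¹ * a') hcmp2, gpd_inv_inv]
    have cmpB : (c * h)⁻¹ * (c * h) = h⁻¹ * h⁻¹⁻¹ := by
      rw [hch_rn, gpd_inv_inv]
    have E : c * h * (h⁻¹ * (c⁻¹ * a') * h₂) = a' * h₂ := by
      rw [← gpd_assoc (c * h) (h⁻¹ * (c⁻¹ * a')) h₂ cmpA hcmp1,
        ← gpd_assoc (c * h) h⁻¹ (c⁻¹ * a') cmpB hcmp2,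
        gpd_assoc c h h⁻¹ hc_rn (cmp_self_inv' h),
        ← hc_rn, gpd_id_right c,
        ← gpd_assoc c c⁻¹ a' (cmp_self_inv' c) hw_cmp,
        ← ha'_dm, gpd_id_left a']
    rw [E]
    exact ord_mul a' a⁻¹ h₂ h₁ ha'_le hh2_le1 hh2_dm.symm hg_cmp
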